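/- If a connected simple graph G that is a tree with maximum degree 3 contains two distinct vertices of degree at least 3, then for every positive weight function μ, sup_v μ(B(v,1))/μ(v) ≥ 3. -/
import Mathlib

open Finset SimpleGraph

private lemma step_aux {V : Type*} (G : SimpleGraph V) [∀ v : V, Fintype (G.neighborSet v)]
    (μ : V → ℝ) (hμ : ∀ w, 0 < μ w)
    (hC : ∀ w, ∑ x ∈ G.neighborFinset w, μ x < 2 * μ w) :
    ∀ {b v : V} (p : G.Walk b v), p.IsPath → ∀ a, G.Adj a b → a ∉ p.support →
      μ b < μ a → μ v < μ a := by
  classical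
  intro b v p
  induction p with
  | nil => intro _ a _ _ hba; exact hba
  | @cons b c v h q ih =>
    intro hp a hab ha hba
    rw [SimpleGraph.Walk.cons_isPath_iff] at hp
    obtain ⟨hq, hbq⟩ := hp
    have haq : a ∉ q.support := by
      simp only [SimpleGraph.Walk.support_cons, List.mem_cons] at ha
      tauto
    have hac : a ≠ c := fun hh => haq (hh ▸ q.start_mem_support)
    have hsum : μ a + μ c ≤ ∑ x ∈ G.neighborFinset b, μ x := by
      have hsub : ({a, c} : Finset V) ⊆ G.neighborFinset b := by
        intro z hz
        simp only [Finset.mem_insert, Finset.mem_singleton] at hz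
        rcases hz with rfl | rfl
        · simpa using hab.symm
        · simpa using h
      calc μ a + μ c = ∑ x ∈ ({a, c} : Finset V), μ x := by
            rw [Finset.sum_pair hac]
        _ ≤ ∑ x ∈ G.neighborFinset b, μ x :=
            Finset.sum_le_sum_of_subset_of_nonneg hsub (fun z _ _ => (hμ z).le)
    have hcb : μ c < μ b := by
      have := hC b
      linarith
    exact lt_trans (ih hq b h hbq hcb) hba

private lemma key_aux {V : Type*} (G : SimpleGraph V) [∀ v : V, Fintype (G.neighborSet v)]
    (μ : V → ℝ) (hμ : ∀ w, 0 < μ w)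
    (hC : ∀ w, ∑ x ∈ G.neighborFinset w, μ x < 2 * μ w)
    {u v : V} (hu : 3 ≤ G.degree u) (huv : u ≠ v)
    (p : G.Walk u v) (hp : p.IsPath) :
    μ v < μ u := by
  classical
  cases p with
  | nil => exact absurd rfl huv
  | @cons _ b _ h q =>
    rw [SimpleGraph.Walk.cons_isPath_iff] at hp
    obtain ⟨hq, huq⟩ := hp
    have hbmem : b ∈ G.neighborFinset u := by simpa using h
    -- the other neighbors of u
    have hcard : 1 < ((G.neighborFinset u).erase b).card := by
      have : (G.neighborFinset u).card = G.degree u := rfl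
      rw [Finset.card_erase_of_mem hbmem, this]
      omega
    obtain ⟨x, hx, y, hy, hxy⟩ := Finset.one_lt_card.mp hcard
    have hA : ∀ z : V, z ∈ G.neighborFinset u → μ u < 2 * μ z := by
      intro z hz
      rw [SimpleGraph.mem_neighborFinset] at hz
      have hmem : u ∈ G.neighborFinset z := by simpa using hz.symm
      have h1 : μ u ≤ ∑ w ∈ G.neighborFinset z, μ w :=
        Finset.single_le_sum (fun w _ => (hμ w).le) hmem
      linarith [hC z]
    have hxu : μ u < 2 * μ x := hA x (Finset.mem_of_mem_erase hx)
    have hyu : μ u < 2 * μ y := hA y (Finset.mem_of_mem_erase hy)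
    have hsum2 : μ x + μ y ≤ ∑ z ∈ (G.neighborFinset u).erase b, μ z := by
      have hsub : ({x, y} : Finset V) ⊆ (G.neighborFinset u).erase b := by
        intro z hz
        simp only [Finset.mem_insert, Finset.mem_singleton] at hz
        rcases hz with rfl | rfl
        · exact hx
        · exact hy
      calc μ x + μ y = ∑ z ∈ ({x, y} : Finset V), μ z := by rw [Finset.sum_pair hxy]
        _ ≤ _ := Finset.sum_le_sum_of_subset_of_nonneg hsub (fun z _ _ => (hμ z).le)
    have hsplit : μ b + ∑ z ∈ (G.neighborFinset u).erase b, μ z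
        = ∑ z ∈ G.neighborFinset u, μ z := Finset.add_sum_erase _ _ hbmem
    have hbu : μ b < μ u := by
      have := hC u
      linarith
    exact step_aux G μ hμ hC q hq u h huq hbu
    
/-- if a tree with maximum degree 3 contains two distinct vertices of
degree at least 3, then for every positive weight function μ,
`sup_v μ(B(v,1))/μ(v) ≥ 3` (every upper bound `C` of the ratios satisfies `C ≥ 3`). -/
theorem stmt_10 {V : Type*} (G : SimpleGraph V) [inst : ∀ v : V, Fintype (G.neighborSet v)]
    (hT : G.IsTree) (hmax : ∀ v : V, G.degree v ≤ 3)
    (u v : V) (huv : u ≠ v) (hu : 3 ≤ G.degree u) (hv : 3 ≤ G.degree v)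
    (μ : V → ℝ) (hμ : ∀ w, 0 < μ w) :
    ∀ C : ℝ, (∀ w : V, (μ w + ∑ x ∈ G.neighborFinset w, μ x) / μ w ≤ C) → 3 ≤ C := by
  classical
  intro C hCb
  by_contra hlt
  push_neg at hlt
  have hC : ∀ w, ∑ x ∈ G.neighborFinset w, μ x < 2 * μ w := by
    intro w
    have h1 := hCb w
    rw [div_le_iff₀ (hμ w)] at h1
    nlinarith [hμ w]
  obtain ⟨p⟩ := hT.isConnected.preconnected u v
  obtain ⟨q⟩ := hT.isConnected.preconnected v u
  have h1 := key_aux G μ hμ hC hu huv p.toPath p.toPath.2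
  have h2 := key_aux G μ hμ hC hv huv.symm q.toPath q.toPath.2
  linarith
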